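/- Let Ω ⊆ ℝ² be open with 0 ∈ Ω, let G : Ω → ℂ² be a smooth Lagrangian immersion (⟨∂₁G, i∂₂G⟩ = 0 on Ω and ∂₁G(x), ∂₂G(x) linearly independent over ℝ at every x) with G(0) = 0, and let φ : Ω → ℝ be smooth with ∂ⱼφ = ⟨G, i∂ⱼG⟩ for j = 1,2 and φ(0) = 0. Set ρ := |G| and 𝔯 := (ρ⁴ + 4φ²)^{1/4}. Then φ(x) = O(|x|³) as x → 0 (i.e. there are constants C, r > 0 with |φ(x)| ≤ C|x|³ for |x| < r), and 𝔯(x)/ρ(x) → 1 as x → 0 with x ≠ 0. -/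

import Mathlib

open MeasureTheory Real Set
noncomputable section

abbrev R2 : Type := EuclideanSpace ℝ (Fin 2)
abbrev R4 : Type := EuclideanSpace ℝ (Fin 4)

/-- Real inner product on ℝ⁴. -/
def rin (u v : R4) : ℝ := inner ℝ u v

/-- Standard complex structure on ℝ⁴ ≅ ℂ². -/
def Jc (v : R4) : R4 := (WithLp.equiv 2 (Fin 4 → ℝ)).symm ![-v 1, v 0, -v 3, v 2]

/-- Partial derivative in the j-th coordinate direction. -/
def pd {E : Type*} [NormedAddCommGroup E] [NormedSpace ℝ E]
    (j : Fin 2) (f : R2 → E) (x : R2) : E :=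
  fderiv ℝ f x (EuclideanSpace.single j 1)

/-- Flat Laplacian acting componentwise. -/
def lap {E : Type*} [NormedAddCommGroup E] [NormedSpace ℝ E]
    (f : R2 → E) (x : R2) : E :=
  pd 0 (pd 0 f) x + pd 1 (pd 1 f) x

section Aux

set_option linter.unreachableTactic false
set_option linter.unusedTactic false

lemma Jc_linear : IsLinearMap ℝ Jc := by
  constructor
  · intro u v; ext i; fin_cases i <;> simp [Jc] <;> ring
  · intro c v; ext i; fin_cases i <;> simp [Jc] <;> ring

/-- `Jc` as a continuous linear map. -/
def JL : R4 →L[ℝ] R4 := LinearMap.toContinuousLinearMap (IsLinearMap.mk' Jc Jc_linear)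

@[simp] lemma JL_apply (v : R4) : JL v = Jc v := rfl

lemma rin_Jc_self (v : R4) : rin v (Jc v) = 0 := by
  simp [rin, Jc, PiLp.inner_apply, Fin.sum_univ_four]
  ring

lemma rin_Jc_antisymm (u v : R4) : rin u (Jc v) = - rin v (Jc u) := by
  simp [rin, Jc, PiLp.inner_apply, Fin.sum_univ_four]
  ring

lemma r2_decomp (v : R2) :
    v = v 0 • EuclideanSpace.single (0:Fin 2) (1:ℝ)
      + v 1 • EuclideanSpace.single (1:Fin 2) (1:ℝ) := by
  ext i
  fin_cases i <;> simp [EuclideanSpace.single_apply]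

lemma clm_zero_of_basis {F : Type*} [NormedAddCommGroup F] [NormedSpace ℝ F] (T : R2 →L[ℝ] F)
    (h0 : T (EuclideanSpace.single (0:Fin 2) (1:ℝ)) = 0)
    (h1 : T (EuclideanSpace.single (1:Fin 2) (1:ℝ)) = 0) : T = 0 := by
  ext v
  rw [show v = v 0 • EuclideanSpace.single (0:Fin 2) (1:ℝ)
      + v 1 • EuclideanSpace.single (1:Fin 2) (1:ℝ) from r2_decomp v]
  simp [h0, h1]

/-- The mixed second derivative formula at the origin. -/
lemma second_deriv_formula (Ω : Set R2) (hΩ : IsOpen Ω) (h0 : (0 : R2) ∈ Ω)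
    (G : R2 → R4) (φ : R2 → ℝ)
    (hG : ∀ x ∈ Ω, ContDiffAt ℝ (⊤ : ℕ∞) G x)
    (hleg : ∀ x ∈ Ω, ∀ j : Fin 2, pd j φ x = rin (G x) (Jc (pd j G x)))
    (hG0 : G 0 = 0) (j k : Fin 2) :
    fderiv ℝ (pd j φ) 0 (EuclideanSpace.single k 1) = rin (pd k G 0) (Jc (pd j G 0)) := by
  have hGd : ContDiffAt ℝ (⊤ : ℕ∞) (fderiv ℝ G) 0 := (hG 0 h0).fderiv_right (by simp)
  have hpj : DifferentiableAt ℝ (pd j G) 0 := by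
    have : pd j G = fun x =>
        (ContinuousLinearMap.apply ℝ R4 (EuclideanSpace.single j 1)) (fderiv ℝ G x) := rfl
    rw [this]
    exact ((ContinuousLinearMap.apply ℝ R4 (EuclideanSpace.single j 1)).differentiableAt).comp 0
      (hGd.differentiableAt (by simp))
  have hA : HasFDerivAt G (fderiv ℝ G 0) 0 := ((hG 0 h0).differentiableAt (by simp)).hasFDerivAt
  have hB : HasFDerivAt (fun x => JL (pd j G x)) (JL.comp (fderiv ℝ (pd j G) 0)) 0 :=
    JL.hasFDerivAt.comp 0 hpj.hasFDerivAt
  have hI := hA.inner (𝕜 := ℝ) hB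
  have heq : pd j φ =ᶠ[nhds 0] fun x => (inner ℝ (G x) (JL (pd j G x)) : ℝ) := by
    filter_upwards [hΩ.mem_nhds h0] with x hx
    exact hleg x hx j
  rw [heq.fderiv_eq, hI.fderiv]
  simp [rin, hG0, pd]

/-- Cubic bound from vanishing of value, gradient and Hessian at the origin. -/
lemma cubic_bound (ε : ℝ) (hε : 0 < ε) (φ : R2 → ℝ)
    (hφ : ∀ y ∈ Metric.ball (0:R2) ε, ContDiffAt ℝ (⊤ : ℕ∞) φ y)
    (hφ0 : φ 0 = 0) (hψ0 : fderiv ℝ φ 0 = 0) (hχ0 : fderiv ℝ (fderiv ℝ φ) 0 = 0) :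
    ∃ C r : ℝ, 0 < C ∧ 0 < r ∧ ∀ x : R2, ‖x‖ < r → |φ x| ≤ C * ‖x‖ ^ 3 := by
  classical
  letI : NormedAddCommGroup (R2 →L[ℝ] R2 →L[ℝ] ℝ) := inferInstance
  letI : NormedSpace ℝ (R2 →L[ℝ] R2 →L[ℝ] ℝ) := inferInstance
  set ψ := fderiv ℝ φ with hψdef
  set χ := fderiv ℝ ψ with hχdef
  have hsub : Metric.closedBall (0:R2) (ε/2) ⊆ Metric.ball 0 ε :=
    Metric.closedBall_subset_ball (by linarith)
  have hψs : ∀ y ∈ Metric.ball (0:R2) ε, ContDiffAt ℝ (⊤ : ℕ∞) ψ y :=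
    fun y hy => (hφ y hy).fderiv_right (by simp)
  have hχs : ∀ y ∈ Metric.ball (0:R2) ε, ContDiffAt ℝ (⊤ : ℕ∞) χ y :=
    fun y hy => (hψs y hy).fderiv_right (by simp)
  have hχd : ∀ y ∈ Metric.ball (0:R2) ε, DifferentiableAt ℝ χ y :=
    fun y hy => (hχs y hy).differentiableAt (by simp)
  have hψd : ∀ y ∈ Metric.ball (0:R2) ε, DifferentiableAt ℝ ψ y :=
    fun y hy => (hψs y hy).differentiableAt (by simp)
  have hφd : ∀ y ∈ Metric.ball (0:R2) ε, DifferentiableAt ℝ φ y :=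
    fun y hy => (hφ y hy).differentiableAt (by simp)
  have hcont : ContinuousOn (fderiv ℝ χ) (Metric.closedBall (0:R2) (ε/2)) := fun y hy =>
    (((hχs y (hsub hy)).fderiv_right (m := (⊤ : ℕ∞)) (by simp)).continuousAt).continuousWithinAt
  obtain ⟨M, hM⟩ := (isCompact_closedBall (0:R2) (ε/2)).exists_bound_of_continuousOn hcont
  have hM0 : 0 ≤ M := le_trans (norm_nonneg _) (hM 0 (Metric.mem_closedBall_self (by linarith)))
  have step1 : ∀ y ∈ Metric.closedBall (0:R2) (ε/2), ‖χ y‖ ≤ M * ‖y‖ := by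
    intro y hy
    have := (convex_closedBall (0:R2) (ε/2)).norm_image_sub_le_of_norm_fderiv_le
      (fun z hz => hχd z (hsub hz)) hM (Metric.mem_closedBall_self (by linarith)) hy
    simpa [hχ0] using this
  have key : ∀ y ∈ Metric.closedBall (0:R2) (ε/2), ∀ z ∈ segment ℝ (0:R2) y,
      z ∈ Metric.closedBall (0:R2) (ε/2) ∧ ‖z‖ ≤ ‖y‖ := by
    intro y hy z hz
    have h1 : z ∈ Metric.closedBall (0:R2) ‖y‖ :=
      (convex_closedBall (0:R2) ‖y‖).segment_subset (by simp)
        (mem_closedBall_zero_iff.mpr le_rfl) hz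
    have h2 : ‖z‖ ≤ ‖y‖ := mem_closedBall_zero_iff.mp h1
    exact ⟨mem_closedBall_zero_iff.mpr (le_trans h2 (mem_closedBall_zero_iff.mp hy)), h2⟩
  have step2 : ∀ y ∈ Metric.closedBall (0:R2) (ε/2), ‖ψ y‖ ≤ M * ‖y‖ ^ 2 := by
    intro y hy
    have := (convex_segment (0:R2) y).norm_image_sub_le_of_norm_fderiv_le
      (f := ψ) (C := M * ‖y‖)
      (fun z hz => hψd z (hsub (key y hy z hz).1))
      (fun z hz => le_trans (step1 z (key y hy z hz).1)
        (mul_le_mul_of_nonneg_left (key y hy z hz).2 hM0))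
      (left_mem_segment ℝ (0:R2) y) (right_mem_segment ℝ (0:R2) y)
    have h0 : ψ 0 = 0 := hψ0
    rw [h0] at this
    simpa [pow_two, mul_assoc] using this
  have step3 : ∀ y ∈ Metric.closedBall (0:R2) (ε/2), |φ y| ≤ M * ‖y‖ ^ 3 := by
    intro y hy
    have := (convex_segment (0:R2) y).norm_image_sub_le_of_norm_fderiv_le
      (f := φ) (C := M * ‖y‖ ^ 2)
      (fun z hz => hφd z (hsub (key y hy z hz).1))
      (fun z hz => le_trans (step2 z (key y hy z hz).1)
        (mul_le_mul_of_nonneg_left (pow_le_pow_left₀ (norm_nonneg _) (key y hy z hz).2 2) hM0))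
      (left_mem_segment ℝ (0:R2) y) (right_mem_segment ℝ (0:R2) y)
    rw [hφ0] at this
    calc |φ y| = ‖φ y - 0‖ := by simp [Real.norm_eq_abs]
    _ ≤ M * ‖y‖ ^ 2 * ‖y - 0‖ := this
    _ = M * ‖y‖ ^ 3 := by rw [sub_zero]; ring
  refine ⟨M + 1, ε/2, by linarith, by linarith, fun x hx => ?_⟩
  calc |φ x| ≤ M * ‖x‖ ^ 3 := step3 x (mem_closedBall_zero_iff.mpr hx.le)
  _ ≤ (M+1) * ‖x‖ ^ 3 := by nlinarith [norm_nonneg x, pow_nonneg (norm_nonneg x) 3]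

/-- Linear lower bound for an immersion at the origin. -/
lemma immersion_lower_bound (Ω : Set R2) (h0 : (0 : R2) ∈ Ω) (G : R2 → R4)
    (hG : ∀ x ∈ Ω, ContDiffAt ℝ (⊤ : ℕ∞) G x)
    (himm : ∀ x ∈ Ω, LinearIndependent ℝ ![pd 0 G x, pd 1 G x])
    (hG0 : G 0 = 0) :
    ∃ c : ℝ, 0 < c ∧ ∀ᶠ x in nhds (0:R2), c * ‖x‖ ≤ ‖G x‖ := by
  set A := fderiv ℝ G 0 with hA
  have hker : LinearMap.ker (A : R2 →ₗ[ℝ] R4) = ⊥ := by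
    rw [LinearMap.ker_eq_bot]
    intro v w hvw
    have hli := himm 0 h0
    rw [Fintype.linearIndependent_iff] at hli
    have key : ∀ z : R2, A z = 0 → z = 0 := by
      intro z hz
      have hdz : A z = z 0 • pd 0 G 0 + z 1 • pd 1 G 0 := by
        conv_lhs => rw [r2_decomp z]
        simp [pd, hA]
      have := hli ![z 0, z 1] (by
        rw [Fin.sum_univ_two]
        simpa using (hdz ▸ hz))
      have h00 := this 0
      have h11 := this 1
      simp at h00 h11
      rw [r2_decomp z, h00, h11]
      simp
    have : A (v - w) = 0 := by rw [map_sub]; exact sub_eq_zero.mpr hvw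
    have := key _ this
    exact sub_eq_zero.mp this
  obtain ⟨K, hK0, hKa⟩ := LinearMap.exists_antilipschitzWith (A : R2 →ₗ[ℝ] R4) hker
  have hKr : (0:ℝ) < K := hK0
  have hlin : ∀ v : R2, ‖v‖ ≤ K * ‖A v‖ := by
    intro v
    have := hKa.le_mul_dist v 0
    simpa [dist_eq_norm] using this
  have hdiff : HasFDerivAt G A 0 := ((hG 0 h0).differentiableAt (by simp)).hasFDerivAt
  have hlo := hasFDerivAt_iff_isLittleO_nhds_zero.mp hdiff
  have hsmall : ∀ᶠ x in nhds (0:R2), ‖G x - A x‖ ≤ (1/(2*K)) * ‖x‖ := by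
    have := hlo.def (by positivity : (0:ℝ) < 1/(2*K))
    simpa [hG0] using this
  refine ⟨1/(2*K), by positivity, ?_⟩
  filter_upwards [hsmall] with x hx
  have h1 : ‖x‖ ≤ K * ‖A x‖ := hlin x
  have h2 : ‖A x‖ ≤ ‖G x‖ + ‖G x - A x‖ := by
    calc ‖A x‖ = ‖G x - (G x - A x)‖ := by rw [sub_sub_cancel]
    _ ≤ ‖G x‖ + ‖G x - A x‖ := norm_sub_le _ _
  have h3 : ‖A x‖ ≥ ‖x‖ / K := by
    rw [ge_iff_le, div_le_iff₀ hKr]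
    linarith [h1]
  have : (1/(2*(K:ℝ))) * ‖x‖ = ‖x‖/K - (1/(2*K)) * ‖x‖ := by field_simp; ring
  linarith

/-- The limit `𝔯/ρ → 1` given the cubic bound and the linear lower bound. -/
lemma ratio_tendsto (G : R2 → R4) (φ : R2 → ℝ) (C r c : ℝ) (hr : 0 < r) (hc : 0 < c)
    (hcube : ∀ x : R2, ‖x‖ < r → |φ x| ≤ C * ‖x‖ ^ 3)
    (hlow : ∀ᶠ x in nhds (0:R2), c * ‖x‖ ≤ ‖G x‖) :
    Filter.Tendsto
      (fun x : R2 => (‖G x‖ ^ 4 + 4 * φ x ^ 2) ^ ((1:ℝ)/4) / ‖G x‖)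
      (nhdsWithin 0 {x : R2 | x ≠ 0}) (nhds 1) := by
  set l := nhdsWithin (0:R2) {x : R2 | x ≠ 0} with hl
  set u : R2 → ℝ := fun x => 4 * φ x ^ 2 / ‖G x‖ ^ 4 with hu
  have hne : ∀ᶠ x in l, x ≠ 0 := self_mem_nhdsWithin
  have hsmall : ∀ᶠ x in l, ‖x‖ < r := by
    apply Filter.Eventually.filter_mono nhdsWithin_le_nhds
    have : Filter.Tendsto (fun x : R2 => ‖x‖) (nhds 0) (nhds 0) := by
      simpa using (continuous_norm (E := R2)).tendsto 0
    exact this.eventually_lt_const hr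
  have hlow' : ∀ᶠ x in l, c * ‖x‖ ≤ ‖G x‖ :=
    Filter.Eventually.filter_mono nhdsWithin_le_nhds hlow
  have hupos : ∀ᶠ x in l, 0 < ‖G x‖ := by
    filter_upwards [hne, hlow'] with x hx0 hlx
    have : 0 < ‖x‖ := by simpa [norm_pos_iff] using hx0
    nlinarith
  have huev : Filter.Tendsto u l (nhds 0) := by
    apply squeeze_zero' (g := fun x => (4 * C ^ 2 / c ^ 4) * ‖x‖ ^ 2)
    · filter_upwards [hupos] with x hx
      positivity
    · filter_upwards [hne, hsmall, hlow'] with x hx0 hxr hlx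
      have hxpos : 0 < ‖x‖ := by simpa [norm_pos_iff] using hx0
      have h1 : φ x ^ 2 ≤ C ^ 2 * ‖x‖ ^ 6 := by
        have := hcube x hxr
        nlinarith [abs_nonneg (φ x), sq_abs (φ x), norm_nonneg x]
      have h2 : c ^ 4 * ‖x‖ ^ 4 ≤ ‖G x‖ ^ 4 := by
        have := pow_le_pow_left₀ (by positivity) hlx 4
        calc c ^ 4 * ‖x‖ ^ 4 = (c * ‖x‖) ^ 4 := by ring
        _ ≤ ‖G x‖ ^ 4 := this
      have h3 : (0:ℝ) < c ^ 4 * ‖x‖ ^ 4 := by positivity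
      calc u x ≤ (4 * C ^ 2 * ‖x‖ ^ 6) / (c ^ 4 * ‖x‖ ^ 4) := by
            apply div_le_div₀ (by positivity) (by nlinarith) h3 h2
      _ = (4 * C ^ 2 / c ^ 4) * ‖x‖ ^ 2 := by field_simp
    · have h1 : Filter.Tendsto (fun x : R2 => ‖x‖) (nhds 0) (nhds 0) := by
        simpa using (continuous_norm (E := R2)).tendsto 0
      have := ((h1.pow 2).const_mul (4 * C ^ 2 / c ^ 4)).mono_left
        (nhdsWithin_le_nhds (s := {x : R2 | x ≠ 0}))
      simpa using this
  have hcont : Filter.Tendsto (fun t : ℝ => (1 + t) ^ ((1:ℝ)/4)) (nhds 0) (nhds 1) := by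
    have h1 : ContinuousAt (fun t : ℝ => (1 + t) ^ ((1:ℝ)/4)) 0 :=
      ContinuousAt.rpow_const (by fun_prop) (by norm_num)
    have h2 := h1.tendsto
    have h3 : (1 + (0:ℝ)) ^ ((1:ℝ)/4) = 1 := by norm_num
    simpa [h3] using h2
  have hmain := hcont.comp huev
  apply hmain.congr'
  filter_upwards [hupos] with x hx
  set a := ‖G x‖ with ha
  have h1 : a ^ 4 + 4 * φ x ^ 2 = a ^ 4 * (1 + u x) := by
    show a ^ 4 + 4 * φ x ^ 2 = a ^ 4 * (1 + 4 * φ x ^ 2 / a ^ 4)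
    rw [mul_add, mul_one, mul_div_assoc', mul_div_cancel_left₀ _ (pow_ne_zero 4 hx.ne')]
  simp only [Function.comp]
  rw [h1, Real.mul_rpow (by positivity) (by positivity)]
  have h2 : ((a ^ 4 : ℝ)) ^ ((1:ℝ)/4) = a := by
    rw [← Real.rpow_natCast a 4, ← Real.rpow_mul hx.le]
    norm_num
  rw [h2, mul_comm, mul_div_assoc, div_self hx.ne', mul_one]

end Aux

/-- The asymptotic expansion (k-6-rep-bis) of the paper at a preimage of the origin of
the Heisenberg group: for a Lagrangian immersion `G` with `G(0) = 0` and Legendrian lift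
`φ` with `φ(0) = 0`, one has `φ(x) = O(|x|³)` and `𝔯/ρ → 1` at the origin. -/
theorem legendrian_cubic_vanishing (Ω : Set R2) (hΩ : IsOpen Ω) (h0 : (0 : R2) ∈ Ω)
    (G : R2 → R4) (φ : R2 → ℝ)
    (hG : ∀ x ∈ Ω, ContDiffAt ℝ (⊤ : ℕ∞) G x)
    (hφ : ∀ x ∈ Ω, ContDiffAt ℝ (⊤ : ℕ∞) φ x)
    (hlag : ∀ x ∈ Ω, rin (pd 0 G x) (Jc (pd 1 G x)) = 0)
    (himm : ∀ x ∈ Ω, LinearIndependent ℝ ![pd 0 G x, pd 1 G x])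
    (hleg : ∀ x ∈ Ω, ∀ j : Fin 2, pd j φ x = rin (G x) (Jc (pd j G x)))
    (hG0 : G 0 = 0) (hφ0 : φ 0 = 0) :
    (∃ C r : ℝ, 0 < C ∧ 0 < r ∧ ∀ x : R2, ‖x‖ < r → |φ x| ≤ C * ‖x‖ ^ 3) ∧
    Filter.Tendsto
      (fun x : R2 => (‖G x‖ ^ 4 + 4 * φ x ^ 2) ^ ((1:ℝ)/4) / ‖G x‖)
      (nhdsWithin 0 {x : R2 | x ≠ 0}) (nhds 1) := by
  -- second derivatives of φ vanish at 0
  have hsecond : ∀ j k : Fin 2, fderiv ℝ (pd j φ) 0 (EuclideanSpace.single k 1) = 0 := by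
    intro j k
    rw [second_deriv_formula Ω hΩ h0 G φ hG hleg hG0 j k]
    have h01 : rin (pd 0 G 0) (Jc (pd 1 G 0)) = 0 := hlag 0 h0
    have h10 : rin (pd 1 G 0) (Jc (pd 0 G 0)) = 0 := by
      rw [rin_Jc_antisymm, h01, neg_zero]
    fin_cases j <;> fin_cases k <;>
      first
        | exact rin_Jc_self _
        | simpa using h01
        | simpa using h10
  -- first derivatives of φ vanish at 0
  have hψ0 : fderiv ℝ φ 0 = 0 := by
    apply clm_zero_of_basis
    · have := hleg 0 h0 0
      rw [hG0] at this
      simpa [rin, pd] using this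
    · have := hleg 0 h0 1
      rw [hG0] at this
      simpa [rin, pd] using this
  -- the Hessian of φ vanishes at 0
  have hψdiff : DifferentiableAt ℝ (fderiv ℝ φ) 0 :=
    ((hφ 0 h0).fderiv_right (m := (⊤ : ℕ∞)) (by simp)).differentiableAt (by simp)
  have hswap : ∀ j k : Fin 2,
      (fderiv ℝ (fderiv ℝ φ) 0 (EuclideanSpace.single k 1)) (EuclideanSpace.single j 1)
      = fderiv ℝ (pd j φ) 0 (EuclideanSpace.single k 1) := by
    intro j k
    have hcomp : HasFDerivAt (pd j φ)
        ((ContinuousLinearMap.apply ℝ ℝ (EuclideanSpace.single j (1:ℝ))).comp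
          (fderiv ℝ (fderiv ℝ φ) 0)) 0 :=
      (ContinuousLinearMap.apply ℝ ℝ (EuclideanSpace.single j (1:ℝ))).hasFDerivAt.comp 0
        hψdiff.hasFDerivAt
    rw [hcomp.fderiv]
    rfl
  have hχ0 : fderiv ℝ (fderiv ℝ φ) 0 = 0 := by
    apply clm_zero_of_basis
    · apply clm_zero_of_basis
      · rw [hswap 0 0]; exact hsecond 0 0
      · rw [hswap 1 0]; exact hsecond 1 0
    · apply clm_zero_of_basis
      · rw [hswap 0 1]; exact hsecond 0 1
      · rw [hswap 1 1]; exact hsecond 1 1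
  -- cubic bound
  obtain ⟨ε, hε, hball⟩ := Metric.isOpen_iff.mp hΩ 0 h0
  obtain ⟨C, r, hC, hr, hcube⟩ :=
    cubic_bound ε hε φ (fun y hy => hφ y (hball hy)) hφ0 hψ0 hχ0
  refine ⟨⟨C, r, hC, hr, hcube⟩, ?_⟩
  obtain ⟨c, hc, hlow⟩ := immersion_lower_bound Ω h0 G hG himm hG0
  exact ratio_tendsto G φ C r c hr hc hcube hlow
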